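/- arXiv:2304.07160 — 2 statements merged into one kernel-verified Lean document; each statement's English description precedes it below -/
import Mathlib

section
/- (Restart property.) Suppose the initial condition H : ℤ^d → ℤ satisfies |H(y) − H(y+e)| ≤ 1 for all y ∈ ℤ^d and e ∈ N. Then for any two update lists u and v and every x ∈ ℤ^d, RSOS(u ⧺ v, H)(x) equals the minimum of W(γ) + RSOS(u, H)(γ(0)) over all lattice paths γ for v starting at x, where u ⧺ v denotes the concatenation (the updates of u occurring first). -/
open Classical MeasureTheory

noncomputable section

/-- The set `N` of nearest neighbors of the origin in `ℤ^d`. -/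
def nbr (d : ℕ) : Set (Fin d → ℤ) :=
  {v | ∃ i : Fin d, v = Pi.single i 1 ∨ v = Pi.single i (-1)}

/-- The set `N₀` of nearest neighbors of the origin, together with the origin. -/
def nbr0 (d : ℕ) : Set (Fin d → ℤ) := nbr d ∪ {0}

/-- One RSOS update at site `x`: the height at `x` increases by one iff it is
no larger than all neighboring heights. -/
def rsosStep {d : ℕ} (f : (Fin d → ℤ) → ℤ) (x : Fin d → ℤ) : (Fin d → ℤ) → ℤ :=
  fun y => if y = x ∧ ∀ e ∈ nbr d, f x ≤ f (x + e) then f x + 1 else f y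

/-- RSOS heights after applying the update list `u` (in chronological order)
to the initial condition `H`. -/
def RSOS {d : ℕ} (u : List (Fin d → ℤ)) (H : (Fin d → ℤ) → ℤ) : (Fin d → ℤ) → ℤ :=
  u.foldl rsosStep H

/-- A lattice path for the update list `u` starting at `x`:
`γ n = x` (where `n = u.length`) and for every `1 ≤ k ≤ n` (indexed here by `k+1`
with `k < n`), either the path stays, or the `k`-th update occurs at the path's
position and the path moves to a nearest neighbor (backwards in time). -/
def IsLatticePath {d : ℕ} (u : List (Fin d → ℤ)) (x : Fin d → ℤ) (γ : ℕ → (Fin d → ℤ)) : Prop :=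
  γ u.length = x ∧
    ∀ k < u.length, γ k = γ (k + 1) ∨ (γ (k + 1) = u.getD k 0 ∧ γ k - γ (k + 1) ∈ nbr d)

/-- The weight of a lattice path: the number of indices `1 ≤ j ≤ n` with `γ j = u_j`. -/
def pathWeight {d : ℕ} (u : List (Fin d → ℤ)) (γ : ℕ → (Fin d → ℤ)) : ℕ :=
  ((Finset.range u.length).filter fun k => γ (k + 1) = u.getD k 0).card

/-- The ℓ¹ norm on `ℤ^d`. -/
def l1 {d : ℕ} (v : Fin d → ℤ) : ℕ := ∑ i, (v i).natAbs

lemma nbr_ne_zero {d : ℕ} {e : Fin d → ℤ} (he : e ∈ nbr d) : e ≠ 0 := by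
  obtain ⟨i, h | h⟩ := he <;> subst h <;> intro h0 <;>
    simpa using congrFun h0 i

lemma neg_mem_nbr {d : ℕ} {e : Fin d → ℤ} (he : e ∈ nbr d) : -e ∈ nbr d := by
  obtain ⟨i, h | h⟩ := he <;> subst h
  · exact ⟨i, Or.inr (by rw [← Pi.single_neg])⟩
  · exact ⟨i, Or.inl (by rw [← Pi.single_neg]; simp)⟩

/-- The Lipschitz property for height functions. -/
def Lip {d : ℕ} (G : (Fin d → ℤ) → ℤ) : Prop :=
  ∀ y : Fin d → ℤ, ∀ e ∈ nbr d, |G y - G (y + e)| ≤ 1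

lemma rsosStep_ne {d : ℕ} (F : (Fin d → ℤ) → ℤ) (z x : Fin d → ℤ) (h : x ≠ z) :
    rsosStep F z x = F x := by
  unfold rsosStep
  rw [if_neg (fun hc => h hc.1)]

lemma rsosStep_accept {d : ℕ} (F : (Fin d → ℤ) → ℤ) (z : Fin d → ℤ)
    (hA : ∀ e ∈ nbr d, F z ≤ F (z + e)) : rsosStep F z z = F z + 1 := by
  unfold rsosStep
  rw [if_pos ⟨rfl, hA⟩]

lemma rsosStep_reject {d : ℕ} (F : (Fin d → ℤ) → ℤ) (z : Fin d → ℤ)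
    (hA : ¬ ∀ e ∈ nbr d, F z ≤ F (z + e)) : rsosStep F z z = F z := by
  unfold rsosStep
  rw [if_neg (fun hc => hA hc.2)]

lemma rsosStep_self_le {d : ℕ} (F : (Fin d → ℤ) → ℤ) (z : Fin d → ℤ) :
    rsosStep F z z ≤ F z + 1 := by
  by_cases hA : ∀ e ∈ nbr d, F z ≤ F (z + e)
  · rw [rsosStep_accept F z hA]
  · rw [rsosStep_reject F z hA]; omega

lemma rsosStep_nbr_le {d : ℕ} {F : (Fin d → ℤ) → ℤ} (hF : Lip F) (z : Fin d → ℤ)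
    {e : Fin d → ℤ} (he : e ∈ nbr d) : rsosStep F z z ≤ F (z + e) + 1 := by
  by_cases hA : ∀ e ∈ nbr d, F z ≤ F (z + e)
  · rw [rsosStep_accept F z hA]
    exact add_le_add_left (hA e he) 1
  · rw [rsosStep_reject F z hA]
    have := (abs_le.mp (hF z e he)).2
    omega

lemma rsosStep_lip {d : ℕ} {G : (Fin d → ℤ) → ℤ} (hG : Lip G) (z : Fin d → ℤ) :
    Lip (rsosStep G z) := by
  intro y e he
  have hne : y + e ≠ y := by
    intro h
    exact nbr_ne_zero he (by simpa using congrArg (fun w => w - y) h)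
  by_cases hy : y = z
  · subst hy
    rw [rsosStep_ne G y (y + e) hne]
    by_cases hA : ∀ e ∈ nbr d, G y ≤ G (y + e)
    · rw [rsosStep_accept G y hA]
      have h1 := hA e he
      have h2 := abs_le.mp (hG y e he)
      rw [abs_le]
      omega
    · rw [rsosStep_reject G y hA]
      exact hG y e he
  · by_cases hy2 : y + e = z
    · subst hy2
      rw [rsosStep_ne G (y + e) y hy]
      by_cases hA : ∀ e' ∈ nbr d, G (y + e) ≤ G ((y + e) + e')
      · rw [rsosStep_accept G (y + e) hA]
        have hm : -e ∈ nbr d := neg_mem_nbr he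
        have h1 := hA (-e) hm
        have h2 := abs_le.mp (hG (y + e) (-e) hm)
        have hyy : (y + e) + -e = y := by abel
        rw [hyy] at h1 h2
        rw [abs_le]
        omega
      · rw [rsosStep_reject G (y + e) hA]
        exact hG y e he
    · rw [rsosStep_ne G z y hy, rsosStep_ne G z (y + e) hy2]
      exact hG y e he

lemma RSOS_lip {d : ℕ} (u : List (Fin d → ℤ)) : ∀ {G : (Fin d → ℤ) → ℤ}, Lip G →
    Lip (RSOS u G) := by
  induction u with
  | nil => intro G hG; exact hG
  | cons a u ih =>
    intro G hG
    have : RSOS (a :: u) G = RSOS u (rsosStep G a) := by simp [RSOS]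
    rw [this]
    exact ih (rsosStep_lip hG a)

lemma getD_append_lt {d : ℕ} (v : List (Fin d → ℤ)) (z : Fin d → ℤ) {k : ℕ}
    (h : k < v.length) : (v ++ [z]).getD k 0 = v.getD k 0 := by
  simp [List.getD_eq_getElem?_getD, List.getElem?_append_left h]

lemma getD_concat {d : ℕ} (v : List (Fin d → ℤ)) (z : Fin d → ℤ) :
    (v ++ [z]).getD v.length 0 = z := by
  simp [List.getD_eq_getElem?_getD]

lemma weight_concat {d : ℕ} (v : List (Fin d → ℤ)) (z : Fin d → ℤ) (γ : ℕ → (Fin d → ℤ)) :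
    pathWeight (v ++ [z]) γ
      = pathWeight v γ + (if γ (v.length + 1) = z then 1 else 0) := by
  unfold pathWeight
  rw [List.length_append, List.length_singleton, Finset.range_add_one, Finset.filter_insert,
    getD_concat]
  have hfil : (Finset.range v.length).filter (fun k => γ (k + 1) = (v ++ [z]).getD k 0)
      = (Finset.range v.length).filter (fun k => γ (k + 1) = v.getD k 0) := by
    apply Finset.filter_congr
    intro k hk
    rw [getD_append_lt v z (Finset.mem_range.mp hk)]
  rw [hfil]
  by_cases h : γ (v.length + 1) = z
  · rw [if_pos h, if_pos h, Finset.card_insert_of_notMem (by simp)]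
  · rw [if_neg h, if_neg h, Nat.add_zero]

lemma path_restrict {d : ℕ} {v : List (Fin d → ℤ)} {z x : Fin d → ℤ} {γ : ℕ → (Fin d → ℤ)}
    (hγ : IsLatticePath (v ++ [z]) x γ) :
    IsLatticePath v (γ v.length) γ ∧ γ (v.length + 1) = x ∧
      (γ v.length = x ∨ (x = z ∧ γ v.length - x ∈ nbr d)) := by
  obtain ⟨hend, hstep⟩ := hγ
  rw [List.length_append, List.length_singleton] at hend
  refine ⟨⟨rfl, fun k hk => ?_⟩, hend, ?_⟩
  · rcases hstep k (by rw [List.length_append, List.length_singleton]; omega) with h | ⟨h1, h2⟩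
    · exact Or.inl h
    · exact Or.inr ⟨by rwa [getD_append_lt v z hk] at h1, h2⟩
  · rcases hstep v.length (by rw [List.length_append, List.length_singleton]; omega)
      with h | ⟨h1, h2⟩
    · exact Or.inl (h.trans hend)
    · rw [getD_concat] at h1
      rw [hend] at h1 h2
      exact Or.inr ⟨h1, h2⟩

lemma path_extend {d : ℕ} {v : List (Fin d → ℤ)} {z x y : Fin d → ℤ} {γ : ℕ → (Fin d → ℤ)}
    (hγ : IsLatticePath v y γ)
    (hstep : y = x ∨ (x = z ∧ y - x ∈ nbr d)) :
    ∃ γ' : ℕ → (Fin d → ℤ), IsLatticePath (v ++ [z]) x γ' ∧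
      pathWeight (v ++ [z]) γ' = pathWeight v γ + (if x = z then 1 else 0) ∧
      γ' 0 = γ 0 := by
  refine ⟨Function.update γ (v.length + 1) x, ?_, ?_,
    Function.update_of_ne (by omega) _ _⟩
  · constructor
    · rw [List.length_append, List.length_singleton, Function.update_self]
    · intro k hk
      rw [List.length_append, List.length_singleton] at hk
      rcases Nat.lt_or_ge k v.length with h | h
      · rw [Function.update_of_ne (by omega : k ≠ v.length + 1),
          Function.update_of_ne (by omega : k + 1 ≠ v.length + 1), getD_append_lt v z h]
        exact hγ.2 k h
      · have hk' : k = v.length := by omega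
        subst hk'
        rw [Function.update_of_ne (by omega : v.length ≠ v.length + 1), Function.update_self,
          getD_concat, hγ.1]
        rcases hstep with h | ⟨h1, h2⟩
        · exact Or.inl h
        · exact Or.inr ⟨h1, h2⟩
  · rw [weight_concat, Function.update_self]
    congr 1
    unfold pathWeight
    apply congrArg Finset.card
    apply Finset.filter_congr
    intro k hk
    have := Finset.mem_range.mp hk
    rw [Function.update_of_ne (by omega : k + 1 ≠ v.length + 1)]

/-- Key lemma: for Lipschitz `G`, the RSOS height is the least element of the
set of path weights plus initial heights. -/
lemma rsos_isLeast {d : ℕ} {G : (Fin d → ℤ) → ℤ} (hG : Lip G) (v : List (Fin d → ℤ)) :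
    ∀ x : Fin d → ℤ, IsLeast {w : ℤ | ∃ γ : ℕ → (Fin d → ℤ), IsLatticePath v x γ ∧
      w = (pathWeight v γ : ℤ) + G (γ 0)} (RSOS v G x) := by
  induction v using List.reverseRecOn with
  | nil =>
    intro x
    constructor
    · exact ⟨fun _ => x, ⟨rfl, fun k hk => by simp at hk⟩, by simp [pathWeight, RSOS]⟩
    · rintro w ⟨γ, ⟨h0, -⟩, rfl⟩
      simp only [List.length_nil] at h0
      simp [pathWeight, RSOS, h0]
  | append_singleton v z ih =>
    intro x
    have hF : Lip (RSOS v G) := RSOS_lip v hG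
    have hval : RSOS (v ++ [z]) G x = rsosStep (RSOS v G) z x := by
      simp [RSOS, List.foldl_append]
    rw [hval]
    constructor
    · -- membership : construct an optimal path
      by_cases hx : x = z
      · subst hx
        by_cases hA : ∀ e ∈ nbr d, RSOS v G x ≤ RSOS v G (x + e)
        · -- accepted : stay at x
          obtain ⟨γ, hγ, hw⟩ := (ih x).1
          obtain ⟨γ', hp, hpw, h0⟩ := path_extend (z := x) hγ (Or.inl rfl)
          refine ⟨γ', hp, ?_⟩
          rw [hpw, h0, if_pos rfl, rsosStep_accept _ x hA, hw]
          push_cast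
          ring
        · -- rejected : move to a violating neighbor
          have hA' := hA
          push_neg at hA'
          obtain ⟨e, he, hlt⟩ := hA'
          have hlip := (abs_le.mp (hF x e he)).2
          obtain ⟨γ, hγ, hw⟩ := (ih (x + e)).1
          have hst : x + e = x ∨ (x = x ∧ (x + e) - x ∈ nbr d) :=
            Or.inr ⟨rfl, by simpa using he⟩
          obtain ⟨γ', hp, hpw, h0⟩ := path_extend hγ hst
          refine ⟨γ', hp, ?_⟩
          rw [hpw, h0, if_pos rfl, rsosStep_reject _ x hA]
          push_cast at hw ⊢
          omega
      · -- x ≠ z : stay at x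
        obtain ⟨γ, hγ, hw⟩ := (ih x).1
        obtain ⟨γ', hp, hpw, h0⟩ := path_extend (z := z) hγ (Or.inl rfl)
        refine ⟨γ', hp, ?_⟩
        rw [hpw, h0, if_neg hx, rsosStep_ne _ z x hx, hw]
        push_cast
        ring
    · -- lower bound
      rintro w ⟨γ, hγ, rfl⟩
      obtain ⟨hres, hend, hlaststep⟩ := path_restrict hγ
      have hlb : RSOS v G (γ v.length) ≤ (pathWeight v γ : ℤ) + G (γ 0) :=
        (ih (γ v.length)).2 ⟨γ, hres, rfl⟩
      rw [weight_concat, hend]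
      rcases hlaststep with h | ⟨h1, h2⟩
      · -- stay
        rw [h] at hlb
        by_cases hx : x = z
        · subst hx
          rw [if_pos rfl]
          have h3 := rsosStep_self_le (RSOS v G) x
          push_cast
          omega
        · rw [if_neg hx, rsosStep_ne _ z x hx]
          push_cast
          omega
      · -- move
        subst h1
        rw [if_pos rfl]
        have hyx : x + (γ v.length - x) = γ v.length := by abel
        have h3 := rsosStep_nbr_le hF x h2
        rw [hyx] at h3
        push_cast
        omega

/-- restart property: if the initial condition has adjacent differences
bounded by one, then for update lists `u`, `v`, the RSOS height for the concatenation
`u ++ v` (updates of `u` occurring first) at `x` equals the minimum of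
`W(γ) + RSOS u H (γ 0)` over all lattice paths `γ` for `v` starting at `x`. -/
theorem rsos_restart {d : ℕ} (hd : 1 ≤ d) (H : (Fin d → ℤ) → ℤ)
    (hH : ∀ y : Fin d → ℤ, ∀ e ∈ nbr d, |H y - H (y + e)| ≤ 1)
    (u v : List (Fin d → ℤ)) (x : Fin d → ℤ) :
    RSOS (u ++ v) H x = sInf {w : ℤ | ∃ γ : ℕ → (Fin d → ℤ), IsLatticePath v x γ ∧
      w = (pathWeight v γ : ℤ) + RSOS u H (γ 0)} := by
  have h1 : RSOS (u ++ v) H = RSOS v (RSOS u H) := by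
    simp [RSOS, List.foldl_append]
  rw [h1]
  exact (rsos_isLeast (RSOS_lip u hH) v x).csInf_eq.symm

end
end

section
/- (Dual representation in distribution.) Let U be a random update list, i.e. a random variable on some probability space taking values in the (countable) set of finite lists of locations in ℤ^d, and suppose the law of U is invariant under list reversal: U and its reversed list U^R have the same distribution. Let H₁(y) = ‖y‖₁. Then the integer-valued random variables RSOS(U, 0)(0) and min over y ∈ ℤ^d of RSOS(U, H₁)(y) have the same distribution (the minimum exists, since RSOS(U, H₁)(y) = ‖y‖₁ for all but finitely many y and RSOS(U, H₁) ≥ 0). -/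
open Classical MeasureTheory

noncomputable section

/-- The (countable) space of finite update lists carries the discrete σ-algebra. -/
instance (d : ℕ) : MeasurableSpace (List (Fin d → ℤ)) := ⊤

namespace RSOSAux

variable {d : ℕ}

def Lip (f : (Fin d → ℤ) → ℤ) : Prop := ∀ x, ∀ e ∈ nbr d, f x ≤ f (x + e) + 1

lemma nbr_neg {e : Fin d → ℤ} (he : e ∈ nbr d) : -e ∈ nbr d := by
  obtain ⟨i, h | h⟩ := he
  · exact ⟨i, Or.inr (by rw [h, ← Pi.single_neg])⟩
  · exact ⟨i, Or.inl (by rw [h, ← Pi.single_neg]; norm_num)⟩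

lemma step_ge (f : (Fin d → ℤ) → ℤ) (x y : Fin d → ℤ) : f y ≤ rsosStep f x y := by
  unfold rsosStep
  split_ifs with h
  · rw [h.1]; omega
  · exact le_refl _

lemma step_le (f : (Fin d → ℤ) → ℤ) (x y : Fin d → ℤ) : rsosStep f x y ≤ f y + 1 := by
  unfold rsosStep
  split_ifs with h
  · rw [h.1]
  · omega

lemma step_ne (f : (Fin d → ℤ) → ℤ) (x y : Fin d → ℤ) (h : y ≠ x) : rsosStep f x y = f y := by
  unfold rsosStep
  rw [if_neg (fun hc => h hc.1)]

lemma step_lip {f : (Fin d → ℤ) → ℤ} (hf : Lip f) (x : Fin d → ℤ) : Lip (rsosStep f x) := by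
  intro z e he
  by_cases hz : z = x
  · subst hz
    by_cases hacc : ∀ e' ∈ nbr d, f z ≤ f (z + e')
    · have h1 : rsosStep f z z = f z + 1 := if_pos ⟨rfl, hacc⟩
      have h2 : f (z + e) ≤ rsosStep f z (z + e) := step_ge f z (z + e)
      have h3 : f z ≤ f (z + e) := hacc e he
      omega
    · have h1 : rsosStep f z z = f z := by
        unfold rsosStep; rw [if_neg (fun hc => hacc hc.2)]
      have h2 : f (z + e) ≤ rsosStep f z (z + e) := step_ge f z (z + e)
      have h3 := hf z e he
      omega
  · have h1 : rsosStep f x z = f z := step_ne f x z hz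
    have h2 : f (z + e) ≤ rsosStep f x (z + e) := step_ge f x (z + e)
    have h3 := hf z e he
    omega

lemma step_nonneg {f : (Fin d → ℤ) → ℤ} (hf : ∀ y, 0 ≤ f y) (x : Fin d → ℤ) :
    ∀ y, 0 ≤ rsosStep f x y := fun y => (hf y).trans (step_ge f x y)

end RSOSAux

namespace RSOSAux
variable {d : ℕ}

lemma l1_nbr {e : Fin d → ℤ} (he : e ∈ nbr d) : l1 e = 1 := by
  obtain ⟨i, h | h⟩ := he <;> subst h <;>
    simp [l1, Pi.single_apply, apply_ite Int.natAbs]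

lemma l1_triangle (x e : Fin d → ℤ) : l1 x ≤ l1 (x + e) + l1 e := by
  rw [l1, l1, l1, ← Finset.sum_add_distrib]
  refine Finset.sum_le_sum fun i _ => ?_
  have : (x + e) i = x i + e i := rfl
  omega

lemma l1_lip : Lip (fun y : Fin d → ℤ => (l1 y : ℤ)) := by
  intro x e he
  have h1 := l1_triangle x e
  have h2 := l1_nbr he
  push_cast
  omega

lemma l1_eq_zero {y : Fin d → ℤ} (h : l1 y = 0) : y = 0 := by
  funext i
  have := Finset.sum_eq_zero_iff.mp h i (Finset.mem_univ i)
  simpa [Int.natAbs_eq_zero] using this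

lemma exists_step_down {y : Fin d → ℤ} (hy : y ≠ 0) :
    ∃ e ∈ nbr d, l1 (y + e) + 1 = l1 y := by
  have hex : ∃ i, y i ≠ 0 := by
    by_contra h
    push_neg at h
    exact hy (funext h)
  obtain ⟨i, hi⟩ := hex
  have key : ∀ c : ℤ, (y i + c).natAbs + 1 = (y i).natAbs →
      l1 (y + Pi.single i c) + 1 = l1 y := by
    intro c hc
    rw [l1, l1, ← Finset.sum_erase_add _ _ (Finset.mem_univ i),
      ← Finset.sum_erase_add _ _ (Finset.mem_univ i)]
    have hsum : ∑ j ∈ Finset.univ.erase i, ((y + (Pi.single i c : Fin d → ℤ)) j).natAbs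
        = ∑ j ∈ Finset.univ.erase i, (y j).natAbs := by
      refine Finset.sum_congr rfl fun j hj => ?_
      have hji : j ≠ i := Finset.ne_of_mem_erase hj
      have hval : (y + (Pi.single i c : Fin d → ℤ)) j = y j := by
        simp [Pi.single_apply, hji]
      rw [hval]
    have hii : (y + (Pi.single i c : Fin d → ℤ)) i = y i + c := by simp
    rw [hsum, hii]
    omega
  rcases lt_or_gt_of_ne hi with hneg | hpos
  · exact ⟨Pi.single i 1, ⟨i, Or.inl rfl⟩, key 1 (by omega)⟩
  · exact ⟨Pi.single i (-1), ⟨i, Or.inr rfl⟩, key (-1) (by omega)⟩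

lemma lip_zero_bound {F : (Fin d → ℤ) → ℤ} (hF : Lip F) :
    ∀ y, F 0 ≤ F y + (l1 y : ℤ) := by
  suffices h : ∀ n, ∀ y : Fin d → ℤ, l1 y = n → F 0 ≤ F y + (l1 y : ℤ) by
    intro y; exact h (l1 y) y rfl
  intro n
  induction n with
  | zero =>
    intro y hy
    rw [l1_eq_zero hy]
    simp [l1]
  | succ n ih =>
    intro y hy
    have hy0 : y ≠ 0 := by
      intro h
      rw [h] at hy
      simp [l1] at hy
    obtain ⟨e, he, hstep⟩ := exists_step_down hy0
    have h1 := ih (y + e) (by omega)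
    have h2 : F (y + e) ≤ F y + 1 := by
      have := hF (y + e) (-e) (nbr_neg he)
      simpa using this
    have h3 : (l1 (y + e) : ℤ) + 1 = (l1 y : ℤ) := by exact_mod_cast hstep
    omega

end RSOSAux

namespace RSOSAux
variable {d : ℕ}

lemma key_le {f g : (Fin d → ℤ) → ℤ} (hf : Lip f)
    (hf0 : ∀ y, 0 ≤ f y) (hg0 : ∀ y, 0 ≤ g y) (x : Fin d → ℤ) :
    sInf (Set.range fun y => rsosStep f x y + g y) ≤
      sInf (Set.range fun y => rsosStep g x y + f y) := by
  have hbd : BddBelow (Set.range fun y => rsosStep f x y + g y) := by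
    refine ⟨0, ?_⟩
    rintro b ⟨z, rfl⟩
    exact add_nonneg ((hf0 z).trans (step_ge f x z)) (hg0 z)
  refine le_csInf (Set.range_nonempty _) ?_
  rintro b ⟨y, rfl⟩
  beta_reduce
  by_cases hyx : y = x
  · subst hyx
    by_cases hacc : ∀ e ∈ nbr d, g y ≤ g (y + e)
    · have hgx : rsosStep g y y = g y + 1 := if_pos ⟨rfl, hacc⟩
      have h1 : sInf (Set.range fun z => rsosStep f y z + g z) ≤ rsosStep f y y + g y :=
        csInf_le hbd ⟨y, rfl⟩
      have h2 := step_le f y y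
      rw [hgx]
      omega
    · have hgx : rsosStep g y y = g y := by
        unfold rsosStep; rw [if_neg (fun hc => hacc hc.2)]
      push_neg at hacc
      obtain ⟨e, he, hlt⟩ := hacc
      by_cases haccf : ∀ e' ∈ nbr d, f y ≤ f (y + e')
      · have he0 : y + e ≠ y := by
          intro hh
          rw [hh] at hlt
          exact lt_irrefl _ hlt
        have h1 : sInf (Set.range fun z => rsosStep f y z + g z)
            ≤ rsosStep f y (y + e) + g (y + e) := csInf_le hbd ⟨y + e, rfl⟩
        rw [step_ne f y _ he0] at h1
        have h2 : f (y + e) ≤ f y + 1 := by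
          have := hf (y + e) (-e) (nbr_neg he)
          simpa using this
        rw [hgx]
        omega
      · have hfx : rsosStep f y y = f y := by
          unfold rsosStep; rw [if_neg (fun hc => haccf hc.2)]
        have h1 : sInf (Set.range fun z => rsosStep f y z + g z) ≤ rsosStep f y y + g y :=
          csInf_le hbd ⟨y, rfl⟩
        rw [hfx] at h1
        rw [hgx]
        omega
  · have h1 : sInf (Set.range fun z => rsosStep f x z + g z) ≤ rsosStep f x y + g y :=
      csInf_le hbd ⟨y, rfl⟩
    rw [step_ne f x y hyx] at h1
    rw [step_ne g x y hyx]
    omega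

lemma key_eq {f g : (Fin d → ℤ) → ℤ} (hf : Lip f) (hg : Lip g)
    (hf0 : ∀ y, 0 ≤ f y) (hg0 : ∀ y, 0 ≤ g y) (x : Fin d → ℤ) :
    sInf (Set.range fun y => rsosStep f x y + g y) =
      sInf (Set.range fun y => f y + rsosStep g x y) := by
  have h1 := key_le hf hf0 hg0 x
  have h2 := key_le hg hg0 hf0 x
  have hc : (fun y => rsosStep g x y + f y) = fun y => f y + rsosStep g x y :=
    funext fun y => add_comm _ _
  rw [hc] at h1 h2
  exact le_antisymm h1 h2

lemma RSOS_append_singleton (u : List (Fin d → ℤ)) (x : Fin d → ℤ) (H : (Fin d → ℤ) → ℤ) :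
    RSOS (u ++ [x]) H = rsosStep (RSOS u H) x := by
  simp [RSOS, List.foldl_append]

lemma RSOS_lip (u : List (Fin d → ℤ)) {f : (Fin d → ℤ) → ℤ} (hf : Lip f) : Lip (RSOS u f) := by
  induction u generalizing f with
  | nil => exact hf
  | cons x u ih => exact ih (step_lip hf x)

lemma RSOS_nonneg (u : List (Fin d → ℤ)) {f : (Fin d → ℤ) → ℤ} (hf : ∀ y, 0 ≤ f y) :
    ∀ y, 0 ≤ RSOS u f y := by
  induction u generalizing f with
  | nil => exact hf
  | cons x u ih => exact ih (step_nonneg hf x)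

lemma dual_aux (u : List (Fin d → ℤ)) :
    ∀ f g : (Fin d → ℤ) → ℤ, Lip f → Lip g → (∀ y, 0 ≤ f y) → (∀ y, 0 ≤ g y) →
      sInf (Set.range fun y => RSOS u f y + g y) =
        sInf (Set.range fun y => f y + RSOS u.reverse g y) := by
  induction u with
  | nil =>
    intro f g _ _ _ _
    rfl
  | cons x u ih =>
    intro f g hf hg hf0 hg0
    have h1 : RSOS (x :: u) f = RSOS u (rsosStep f x) := rfl
    rw [h1, ih _ g (step_lip hf x) hg (step_nonneg hf0 x) hg0,
      key_eq hf (RSOS_lip u.reverse hg) hf0 (RSOS_nonneg u.reverse hg0) x,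
      List.reverse_cons, ← RSOS_append_singleton]

lemma dual_det (u : List (Fin d → ℤ)) :
    RSOS u (fun _ => 0) 0 = sInf (Set.range (RSOS u.reverse fun y => (l1 y : ℤ))) := by
  have hz : Lip (fun _ : Fin d → ℤ => (0 : ℤ)) := fun x e he => by simp
  have h := dual_aux u (fun _ => 0) (fun y => (l1 y : ℤ)) hz l1_lip
    (fun _ => le_refl 0) (fun y => Int.natCast_nonneg _)
  have hR : (fun y => (0 : ℤ) + RSOS u.reverse (fun z => (l1 z : ℤ)) y)
      = RSOS u.reverse fun z => (l1 z : ℤ) := funext fun y => zero_add _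
  rw [hR] at h
  rw [← h]
  set F := RSOS u (fun _ => 0) with hFdef
  have hF : Lip F := RSOS_lip u hz
  have hF0 : ∀ y, 0 ≤ F y := RSOS_nonneg u fun _ => le_refl 0
  refine le_antisymm ?_ ?_
  · refine le_csInf (Set.range_nonempty _) ?_
    rintro b ⟨y, rfl⟩
    beta_reduce
    have := lip_zero_bound hF y
    omega
  · have hmem : F 0 ∈ Set.range fun y => F y + (l1 y : ℤ) := by
      refine ⟨0, ?_⟩
      simp [l1]
    exact csInf_le ⟨0, by rintro b ⟨z, rfl⟩; exact add_nonneg (hF0 z) (Int.natCast_nonneg _)⟩ hmem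

end RSOSAux

/-- dual representation in distribution: if the law of a random update
list `U` is invariant under list reversal, then `RSOS(U, 0)(0)` and the minimum over
`y` of the dual process `RSOS(U, H₁)(y)` (with `H₁ y = ‖y‖₁`, the minimum being
attained) have the same distribution. -/
theorem rsos_dual_rep_distribution {d : ℕ} (hd : 1 ≤ d)
    {Ω : Type*} [MeasurableSpace Ω] (μ : Measure Ω) [IsProbabilityMeasure μ]
    (U : Ω → List (Fin d → ℤ)) (hU : Measurable U)
    (hrev : μ.map U = μ.map fun ω => (U ω).reverse) :
    μ.map (fun ω => RSOS (U ω) (fun _ => 0) 0) =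
      μ.map fun ω => sInf (Set.range (RSOS (U ω) fun y => (l1 y : ℤ))) := by
  have hg : Measurable (fun u : List (Fin d → ℤ) =>
      sInf (Set.range (RSOS u fun y => (l1 y : ℤ)))) := measurable_from_top
  have hrevm : Measurable (fun l : List (Fin d → ℤ) => l.reverse) := measurable_from_top
  have h1 : (fun ω => RSOS (U ω) (fun _ => 0) 0)
      = (fun u : List (Fin d → ℤ) => sInf (Set.range (RSOS u fun y => (l1 y : ℤ))))
        ∘ (fun ω => (U ω).reverse) := by
    funext ω
    exact RSOSAux.dual_det (U ω)
  symm
  have h2 : (fun ω => sInf (Set.range (RSOS (U ω) fun y => (l1 y : ℤ))))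
      = (fun u : List (Fin d → ℤ) => sInf (Set.range (RSOS u fun y => (l1 y : ℤ)))) ∘ U := rfl
  have hUrev : Measurable fun ω => (U ω).reverse := hrevm.comp hU
  rw [h2, ← Measure.map_map hg hU, hrev, Measure.map_map hg hUrev, ← h1]


end
end
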